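/- Let A be a finite-dimensional left-symmetric color algebra over k with respect to ε, and let P : A → A be a homogeneous linear map of degree 0 with P² = id_A. Then the following are equivalent: (1) P is a Nijenhuis operator on A; (2) P + id_A is a Rota–Baxter operator of weight −2 on A; (3) P − id_A is a Rota–Baxter operator of weight 2 on A. -/
import Mathlib


open scoped TensorProduct

/-- A skew-symmetric bicharacter of an abelian group `G` over a field `k`. -/
structure Bicharacter (G : Type*) (k : Type*) [AddCommGroup G] [Field k] where
  ε : G → G → k
  ne_zero : ∀ a b : G, ε a b ≠ 0
  add_left : ∀ a b c : G, ε (a + b) c = ε a c * ε b c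
  add_right : ∀ a b c : G, ε a (b + c) = ε a b * ε a c
  skew : ∀ a b : G, ε a b * ε b a = 1

/-- `(A, 𝒜, μ)` is a left-symmetric color algebra over `k` with respect to the
skew-symmetric bicharacter `ε`: the grading `𝒜` is an internal direct sum
decomposition of `A`, the multiplication `μ` respects the grading, and the
left-symmetric color identity holds on homogeneous elements. -/
structure IsLSCA {G k A : Type*} [AddCommGroup G] [DecidableEq G] [Field k]
    [AddCommGroup A] [Module k A]
    (ε : Bicharacter G k) (𝒜 : G → Submodule k A) (μ : A →ₗ[k] A →ₗ[k] A) : Prop where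
  internal : DirectSum.IsInternal 𝒜
  graded_mul : ∀ a b : G, ∀ x ∈ 𝒜 a, ∀ y ∈ 𝒜 b, μ x y ∈ 𝒜 (a + b)
  left_symm : ∀ a b c : G, ∀ x ∈ 𝒜 a, ∀ y ∈ 𝒜 b, ∀ z ∈ 𝒜 c,
    μ (μ x y) z - μ x (μ y z) = ε.ε a b • (μ (μ y x) z - μ y (μ x z))

/-- `P` is a Nijenhuis operator on the left-symmetric color algebra `A`, homogeneous
of degree `c`:  `P(x)P(y) = ε(|P|+|x|,|P|) P(P(x)y) + P(x P(y)) − ε(|x|,|P|) P(P(xy))`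
for all homogeneous `x, y`. -/
def IsNijenhuisOp {G k A : Type*} [AddCommGroup G] [Field k] [AddCommGroup A] [Module k A]
    (ε : Bicharacter G k) (𝒜 : G → Submodule k A) (μ : A →ₗ[k] A →ₗ[k] A)
    (c : G) (P : A →ₗ[k] A) : Prop :=
  (∀ a : G, ∀ x ∈ 𝒜 a, P x ∈ 𝒜 (a + c)) ∧
  ∀ a b : G, ∀ x ∈ 𝒜 a, ∀ y ∈ 𝒜 b,
    μ (P x) (P y)
      = ε.ε (c + a) c • P (μ (P x) y) + P (μ x (P y)) - ε.ε a c • P (P (μ x y))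

/-- `P` is a Rota-Baxter operator of weight `lam` on the left-symmetric color algebra
`A`, homogeneous of degree `c`:
`P(x)P(y) = ε(|P|+|x|,|P|) P(P(x)y) + P(x P(y)) + lam·P(xy)` for all homogeneous
`x, y`. -/
def IsRotaBaxterOp {G k A : Type*} [AddCommGroup G] [Field k] [AddCommGroup A] [Module k A]
    (ε : Bicharacter G k) (𝒜 : G → Submodule k A) (μ : A →ₗ[k] A →ₗ[k] A)
    (c : G) (lam : k) (P : A →ₗ[k] A) : Prop :=
  (∀ a : G, ∀ x ∈ 𝒜 a, P x ∈ 𝒜 (a + c)) ∧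
  ∀ a b : G, ∀ x ∈ 𝒜 a, ∀ y ∈ 𝒜 b,
    μ (P x) (P y)
      = ε.ε (c + a) c • P (μ (P x) y) + P (μ x (P y)) + lam • P (μ x y)

/-- If `P` is a homogeneous linear map of degree `0` on the
finite-dimensional left-symmetric color algebra `A` with `P² = id`, then the following
are equivalent: (1) `P` is a Nijenhuis operator; (2) `P + id` is a Rota-Baxter operator
of weight `−2`; (3) `P − id` is a Rota-Baxter operator of weight `2`. -/
theorem nijenhuis_tfae_of_involution {G k A : Type*} [AddCommGroup G]
    [DecidableEq G] [Field k] [AddCommGroup A] [Module k A] [FiniteDimensional k A]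
    (ε : Bicharacter G k) (𝒜 : G → Submodule k A) (μ : A →ₗ[k] A →ₗ[k] A)
    (hA : IsLSCA ε 𝒜 μ)
    (P : A →ₗ[k] A) (hPhom : ∀ a : G, ∀ x ∈ 𝒜 a, P x ∈ 𝒜 a)
    (hP2 : P ∘ₗ P = LinearMap.id) :
    (IsNijenhuisOp ε 𝒜 μ 0 P ↔ IsRotaBaxterOp ε 𝒜 μ 0 (-2) (P + LinearMap.id)) ∧
    (IsRotaBaxterOp ε 𝒜 μ 0 (-2) (P + LinearMap.id) ↔
      IsRotaBaxterOp ε 𝒜 μ 0 2 (P - LinearMap.id)) := by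
  have hPP : ∀ x : A, P (P x) = x := fun x => by
    simpa using LinearMap.congr_fun hP2 x
  have eps0 : ∀ a : G, ε.ε a (0 : G) = 1 := by
    intro a
    have h := ε.add_right a 0 0
    rw [add_zero] at h
    exact (mul_left_cancel₀ (ε.ne_zero a 0) (by rw [mul_one, ← h])).symm
  constructor
  · constructor
    · rintro ⟨hhom, hmul⟩
      refine ⟨fun a x hx => by simpa using (𝒜 a).add_mem (hPhom a x hx) hx, ?_⟩
      intro a b x hx y hy
      have h := hmul a b x hx y hy
      rw [eps0, eps0, one_smul, one_smul, hPP] at h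
      simp only [LinearMap.add_apply, LinearMap.id_apply, map_add, eps0, one_smul]
      linear_combination (norm := module) h
    · rintro ⟨hhom, hmul⟩
      refine ⟨fun a x hx => by simpa using hPhom a x hx, ?_⟩
      intro a b x hx y hy
      have h := hmul a b x hx y hy
      simp only [LinearMap.add_apply, LinearMap.id_apply, map_add, eps0, one_smul] at h
      rw [eps0, eps0, one_smul, one_smul, hPP]
      linear_combination (norm := module) h
  · constructor
    · rintro ⟨hhom, hmul⟩
      refine ⟨fun a x hx => by simpa using (𝒜 a).sub_mem (hPhom a x hx) hx, ?_⟩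
      intro a b x hx y hy
      have h := hmul a b x hx y hy
      simp only [LinearMap.add_apply, LinearMap.sub_apply, LinearMap.id_apply,
        map_add, map_sub, eps0, one_smul] at h ⊢
      linear_combination (norm := module) h
    · rintro ⟨hhom, hmul⟩
      refine ⟨fun a x hx => by simpa using (𝒜 a).add_mem (hPhom a x hx) hx, ?_⟩
      intro a b x hx y hy
      have h := hmul a b x hx y hy
      simp only [LinearMap.add_apply, LinearMap.sub_apply, LinearMap.id_apply,
        map_add, map_sub, eps0, one_smul] at h ⊢
      linear_combination (norm := module) h
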